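/- Subset structure of optimal assignments: for any finite set C of bidders and any j with 1 ≤ j ≤ |C|, and any S that is an optimal assignment of j−1 slots from C, there exists an optimal assignment S' of j slots from C such that the set of bidders in S' strictly contains the set of bidders in S. -/

import Mathlib

noncomputable section

/-- Efficiency of an ordered list of ads `(e, q)`. -/
def eff : List (ℝ × ℝ) → ℝ
  | [] => 0
  | a :: L => a.1 + a.2 * eff L

/-- Product of continuation probabilities of a list of ads. -/
def qprod (L : List (ℝ × ℝ)) : ℝ := (L.map Prod.snd).prod

/-!
Induct on the set of bidders, removing the bidder `h` of largest adjusted ecpm. Since `h` heads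
every sorted assignment containing it, an optimal `k`-set either avoids `h` or consists of `h`
followed by an optimal `(k - 1)`-set of the remaining bidders. If `h ∉ S`, the better of
`insert h S` and the extension of `S` given by induction is optimal. If `h ∈ S`, extend
`S \ {h}` twice by induction, to `W` and to `insert y W`. An exchange inequality (inserting a
bidder `c` above `d` multiplies the marginal gain of `d` by `c.2`) shows that `h` followed by
`W` is at least as efficient as `insert y W`, so `insert h W` is optimal.
-/

namespace SubsetStructure

open Finset

def adjEcpm (a : ℝ × ℝ) : ℝ := a.1 / (1 - a.2)

def IsBidder (a : ℝ × ℝ) : Prop := 0 < a.1 ∧ 0 < a.2 ∧ a.2 < 1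

lemma IsBidder.fst_eq {a : ℝ × ℝ} (ha : IsBidder a) : a.1 = (1 - a.2) * adjEcpm a := by
  have : 1 - a.2 ≠ 0 := by linarith [ha.2.2]
  rw [adjEcpm]; field_simp

@[simp] lemma eff_nil : eff [] = 0 := rfl

@[simp] lemma eff_cons (a : ℝ × ℝ) (L : List (ℝ × ℝ)) :
    eff (a :: L) = a.1 + a.2 * eff L := rfl

@[simp] lemma qprod_cons (a : ℝ × ℝ) (L : List (ℝ × ℝ)) :
    qprod (a :: L) = a.2 * qprod L := by
  simp [qprod]

lemma eff_append (L M : List (ℝ × ℝ)) : eff (L ++ M) = eff L + qprod L * eff M := by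
  induction L with
  | nil => simp [qprod]
  | cons a L ih => simp only [List.cons_append, eff_cons, qprod_cons, ih]; ring

lemma eff_add_qprod_mul_le {L : List (ℝ × ℝ)} {m r : ℝ} (hL : ∀ a ∈ L, IsBidder a)
    (hm : ∀ a ∈ L, adjEcpm a ≤ m) (hr : r ≤ m) : eff L + qprod L * r ≤ m := by
  induction L with
  | nil => simpa [qprod]
  | cons a L ih =>
    have ha := hL a (by simp)
    have htail := ih (fun b hb => hL b (by simp [hb])) (fun b hb => hm b (by simp [hb]))
    calc eff (a :: L) + qprod (a :: L) * r
        = (1 - a.2) * adjEcpm a + a.2 * (eff L + qprod L * r) := by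
          rw [eff_cons, qprod_cons, ha.fst_eq]; ring
      _ ≤ (1 - a.2) * m + a.2 * m := by
          have : 0 ≤ 1 - a.2 := by linarith [ha.2.2]
          gcongr
          · exact hm a (by simp)
          · exact ha.2.1.le
      _ = m := by ring

/-- `ByEcpm a b`: `a` may be placed before `b` in an optimal assignment. -/
def ByEcpm (a b : ℝ × ℝ) : Prop := adjEcpm b ≤ adjEcpm a

instance : DecidableRel ByEcpm := fun _ _ => Classical.propDecidable _

instance : Std.Total ByEcpm := ⟨fun a b => le_total (adjEcpm b) (adjEcpm a)⟩

instance : IsTrans (ℝ × ℝ) ByEcpm := ⟨fun _ _ _ hab hbc => hbc.trans hab⟩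

lemma eff_swap_le {a b : ℝ × ℝ} (ha : IsBidder a) (hb : IsBidder b)
    (hab : adjEcpm a ≤ adjEcpm b) (L : List (ℝ × ℝ)) :
    eff (a :: b :: L) ≤ eff (b :: a :: L) := by
  have key : a.1 * (1 - b.2) ≤ b.1 * (1 - a.2) := by
    have : 0 ≤ (1 - a.2) * (1 - b.2) := mul_nonneg (by linarith [ha.2.2]) (by linarith [hb.2.2])
    rw [ha.fst_eq, hb.fst_eq]
    linear_combination mul_le_mul_of_nonneg_left hab this
  simp only [eff_cons]
  linear_combination key

lemma eff_cons_le_orderedInsert {a : ℝ × ℝ} {L : List (ℝ × ℝ)}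
    (hL : ∀ b ∈ a :: L, IsBidder b) : eff (a :: L) ≤ eff (L.orderedInsert ByEcpm a) := by
  induction L with
  | nil => simp
  | cons b L ih =>
    have ha := hL a (by simp)
    have hb := hL b (by simp)
    by_cases hab : ByEcpm a b
    · simp [List.orderedInsert_cons_of_le _ _ hab]
    · rw [List.orderedInsert_of_not_le _ _ hab]
      have ih' := ih fun c hc => hL c (List.cons_subset_cons a (List.subset_cons_self b L) hc)
      calc eff (a :: b :: L) ≤ eff (b :: a :: L) := eff_swap_le ha hb (le_of_not_ge hab) L
        _ ≤ eff (b :: L.orderedInsert ByEcpm a) := by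
          simp only [eff_cons]; gcongr
          · exact hb.2.1.le
          · exact ih'

lemma eff_le_eff_insertionSort {L : List (ℝ × ℝ)} (hL : ∀ a ∈ L, IsBidder a) :
    eff L ≤ eff (L.insertionSort ByEcpm) := by
  induction L with
  | nil => simp
  | cons a L ih =>
    have ha := hL a (by simp)
    calc eff (a :: L) ≤ eff (a :: L.insertionSort ByEcpm) := by
          simp only [eff_cons]; gcongr
          · exact ha.2.1.le
          · exact ih (fun b hb => hL b (by simp [hb]))
      _ ≤ eff ((a :: L).insertionSort ByEcpm) := by
          refine eff_cons_le_orderedInsert fun b hb => hL b ?_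
          simpa [List.mem_insertionSort] using hb

def ecpmSort (A : Finset (ℝ × ℝ)) : List (ℝ × ℝ) := A.toList.insertionSort ByEcpm

/-- By `eff_le_setEff_toFinset`, the largest efficiency of an ordering of `A`. -/
def setEff (A : Finset (ℝ × ℝ)) : ℝ := eff (ecpmSort A)

@[simp] lemma mem_ecpmSort {A : Finset (ℝ × ℝ)} {x : ℝ × ℝ} :
    x ∈ ecpmSort A ↔ x ∈ A := by
  simp [ecpmSort, List.mem_insertionSort]

lemma nodup_ecpmSort (A : Finset (ℝ × ℝ)) : (ecpmSort A).Nodup :=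
  (List.perm_insertionSort _ _).nodup_iff.2 A.nodup_toList

@[simp] lemma length_ecpmSort (A : Finset (ℝ × ℝ)) : (ecpmSort A).length = A.card := by
  simp [ecpmSort, List.length_insertionSort]

@[simp] lemma toFinset_ecpmSort (A : Finset (ℝ × ℝ)) : (ecpmSort A).toFinset = A := by
  ext; simp

lemma ecpmSort_toFinset {L : List (ℝ × ℝ)} (hL : L.Nodup) (hs : L.Pairwise ByEcpm)
    (hinj : Set.InjOn adjEcpm ↑L.toFinset) : ecpmSort L.toFinset = L := by
  refine ((List.perm_insertionSort _ _).trans (List.toFinset_toList hL)).eq_of_pairwise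
    (fun a b ha hb hba hab => hinj ?_ ?_ (le_antisymm hab hba))
    (List.pairwise_insertionSort _ _) hs
  · simpa using ha
  · simpa using hb

lemma setEff_toFinset {L : List (ℝ × ℝ)} (hL : L.Nodup) (hs : L.Pairwise ByEcpm)
    (hinj : Set.InjOn adjEcpm ↑L.toFinset) : setEff L.toFinset = eff L := by
  rw [setEff, ecpmSort_toFinset hL hs hinj]

lemma eff_le_setEff_toFinset {L : List (ℝ × ℝ)} (hL : L.Nodup) (hbid : ∀ a ∈ L, IsBidder a)
    (hinj : Set.InjOn adjEcpm ↑L.toFinset) : eff L ≤ setEff L.toFinset := by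
  have hperm := List.perm_insertionSort ByEcpm L
  calc eff L ≤ eff (L.insertionSort ByEcpm) := eff_le_eff_insertionSort hbid
    _ = setEff L.toFinset := by
      rw [← List.toFinset_eq_of_perm _ _ hperm] at hinj ⊢
      exact (setEff_toFinset (hperm.nodup_iff.2 hL) (List.pairwise_insertionSort _ _) hinj).symm

lemma setEff_union {A B : Finset (ℝ × ℝ)} (hinj : Set.InjOn adjEcpm ↑(A ∪ B))
    (hAB : ∀ a ∈ A, ∀ b ∈ B, adjEcpm b < adjEcpm a) :
    setEff (A ∪ B) = setEff A + qprod (ecpmSort A) * setEff B := by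
  have hnd : (ecpmSort A ++ ecpmSort B).Nodup := by
    refine List.nodup_append.2 ⟨nodup_ecpmSort A, nodup_ecpmSort B, ?_⟩
    rintro a ha b hb rfl
    exact lt_irrefl _ (hAB a (mem_ecpmSort.1 ha) a (mem_ecpmSort.1 hb))
  have hs : (ecpmSort A ++ ecpmSort B).Pairwise ByEcpm :=
    List.pairwise_append.2 ⟨List.pairwise_insertionSort _ _, List.pairwise_insertionSort _ _,
      fun a ha b hb => (hAB a (mem_ecpmSort.1 ha) b (mem_ecpmSort.1 hb)).le⟩
  have hfin : (ecpmSort A ++ ecpmSort B).toFinset = A ∪ B := by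
    rw [List.toFinset_append, toFinset_ecpmSort, toFinset_ecpmSort]
  rw [← hfin] at hinj ⊢
  rw [setEff_toFinset hnd hs hinj, eff_append]
  rfl

lemma setEff_insert_of_forall_lt {A : Finset (ℝ × ℝ)} {h : ℝ × ℝ}
    (hinj : Set.InjOn adjEcpm ↑(insert h A)) (htop : ∀ x ∈ A, adjEcpm x < adjEcpm h) :
    setEff (insert h A) = h.1 + h.2 * setEff A := by
  rw [insert_eq] at hinj ⊢
  rw [setEff_union hinj (by simpa using htop)]
  simp [setEff, ecpmSort, qprod]

lemma setEff_insert {X : Finset (ℝ × ℝ)} {c : ℝ × ℝ}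
    (hinj : Set.InjOn adjEcpm ↑(insert c X)) (hcX : c ∉ X) :
    setEff (insert c X) = c.2 * setEff X + (1 - c.2) * setEff (X.filter (adjEcpm c < adjEcpm ·))
      + qprod (ecpmSort (X.filter (adjEcpm c < adjEcpm ·))) * c.1 := by
  set U := X.filter (adjEcpm c < adjEcpm ·)
  set D := X.filter (fun x => ¬ adjEcpm c < adjEcpm x)
  have hUD : U ∪ D = X := filter_union_filter_not_eq _ X
  have hD : ∀ y ∈ D, adjEcpm y < adjEcpm c := by
    intro y hy
    obtain ⟨hyX, hyc⟩ := mem_filter.1 hy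
    refine lt_of_le_of_ne (not_lt.1 hyc) fun heq => hcX ?_
    rwa [← hinj (by simp [hyX]) (by simp) heq]
  have hU : ∀ u ∈ U, adjEcpm c < adjEcpm u := fun u hu => (mem_filter.1 hu).2
  have hinjX : Set.InjOn adjEcpm ↑(U ∪ D) := hUD ▸ hinj.mono (by simp)
  have hX : setEff X = setEff U + qprod (ecpmSort U) * setEff D := by
    rw [← hUD, setEff_union hinjX fun u hu y hy => (hD y hy).trans (hU u hu)]
  have hcX' : setEff (insert c X) = setEff U + qprod (ecpmSort U) * (c.1 + c.2 * setEff D) := by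
    have hinj' : Set.InjOn adjEcpm ↑(U ∪ insert c D) := by rwa [union_insert, hUD]
    rw [← hUD, ← union_insert, setEff_union hinj', setEff_insert_of_forall_lt
      (hinj'.mono (coe_subset.2 subset_union_right)) hD]
    intro u hu y hy
    rcases mem_insert.1 hy with rfl | hy
    · exact hU u hu
    · exact (hD y hy).trans (hU u hu)
  rw [hcX', hX]
  ring

lemma setEff_add_qprod_mul_le {A : Finset (ℝ × ℝ)} {m r : ℝ} (hA : ∀ a ∈ A, IsBidder a)
    (hm : ∀ a ∈ A, adjEcpm a ≤ m) (hr : r ≤ m) : setEff A + qprod (ecpmSort A) * r ≤ m :=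
  eff_add_qprod_mul_le (fun a ha => hA a (mem_ecpmSort.1 ha))
    (fun a ha => hm a (mem_ecpmSort.1 ha)) hr

/-- By `setEff_insert`, both sides depend on `d` only through `c.2 * setEff (insert d X)`,
since `d` ranks below `c`. -/
lemma setEff_insert_insert_le {X : Finset (ℝ × ℝ)} {h c d : ℝ × ℝ}
    (hX : ∀ a ∈ X, IsBidder a) (hh : IsBidder h) (hc : IsBidder c)
    (hinj : Set.InjOn adjEcpm ↑(insert c (insert d X))) (hcX : c ∉ X)
    (hdc : adjEcpm d < adjEcpm c) (hXh : ∀ a ∈ X, adjEcpm a ≤ adjEcpm h)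
    (hch : adjEcpm c ≤ adjEcpm h) (hd : setEff (insert d X) ≤ h.1 + h.2 * setEff X) :
    setEff (insert c (insert d X)) ≤ h.1 + h.2 * setEff (insert c X) := by
  have hcd : c ∉ insert d X := by
    rw [mem_insert, not_or]; exact ⟨fun hcd => hdc.ne' (congrArg adjEcpm hcd), hcX⟩
  have hfilter : (insert d X).filter (adjEcpm c < adjEcpm ·) = X.filter (adjEcpm c < adjEcpm ·) :=
    by rw [filter_insert, if_neg (not_lt.2 hdc.le)]
  rw [setEff_insert hinj hcd, hfilter,
    setEff_insert (hinj.mono (coe_subset.2 (insert_subset_insert c (subset_insert d X)))) hcX]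
  set U := X.filter (adjEcpm c < adjEcpm ·)
  have hbound : setEff U + qprod (ecpmSort U) * adjEcpm c ≤ adjEcpm h :=
    setEff_add_qprod_mul_le (fun a ha => hX a (mem_filter.1 ha).1)
      (fun a ha => hXh a (mem_filter.1 ha).1) hch
  have hq : 0 ≤ (1 - h.2) * (1 - c.2) := mul_nonneg (by linarith [hh.2.2]) (by linarith [hc.2.2])
  rw [hh.fst_eq] at hd
  rw [hc.fst_eq, hh.fst_eq]
  linear_combination mul_le_mul_of_nonneg_left hd hc.2.1.le + mul_le_mul_of_nonneg_left hbound hq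

def IsOptimal (C : Finset (ℝ × ℝ)) (k : ℕ) (A : Finset (ℝ × ℝ)) : Prop :=
  A ⊆ C ∧ A.card = k ∧ ∀ B ⊆ C, B.card = k → setEff B ≤ setEff A

lemma IsOptimal.anti {C C' S : Finset (ℝ × ℝ)} {k : ℕ} (hS : IsOptimal C k S)
    (hSC' : S ⊆ C') (hC' : C' ⊆ C) : IsOptimal C' k S :=
  ⟨hSC', hS.2.1, fun B hB => hS.2.2 B (hB.trans hC')⟩

def HasSubsetStructure (C : Finset (ℝ × ℝ)) : Prop :=
  ∀ k S, IsOptimal C k S → k < C.card →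
    ∃ x ∈ C, x ∉ S ∧ IsOptimal C (k + 1) (insert x S)

section TopBidder

variable {C : Finset (ℝ × ℝ)} {h : ℝ × ℝ}

lemma setEff_insert_top (hinj : Set.InjOn adjEcpm ↑(insert h C))
    (htop : ∀ x ∈ C, adjEcpm x < adjEcpm h) {B : Finset (ℝ × ℝ)} (hB : B ⊆ C) :
    setEff (insert h B) = h.1 + h.2 * setEff B :=
  setEff_insert_of_forall_lt (hinj.mono (coe_subset.2 (insert_subset_insert h hB)))
    fun x hx => htop x (hB hx)

lemma isOptimal_erase_top (hh : IsBidder h) (hinj : Set.InjOn adjEcpm ↑(insert h C))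
    (htop : ∀ x ∈ C, adjEcpm x < adjEcpm h) {k : ℕ} {S : Finset (ℝ × ℝ)}
    (hS : IsOptimal (insert h C) (k + 1) S) (hhS : h ∈ S) : IsOptimal C k (S.erase h) := by
  have hSC : S.erase h ⊆ C := subset_insert_iff.1 hS.1
  refine ⟨hSC, by rw [card_erase_of_mem hhS, hS.2.1, Nat.add_sub_cancel],
    fun B hBC hBcard => ?_⟩
  have hhB : h ∉ B := fun hhB => lt_irrefl _ (htop h (hBC hhB))
  have hle : setEff (insert h B) ≤ setEff (insert h (S.erase h)) := by
    rw [insert_erase hhS]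
    exact hS.2.2 _ (insert_subset_insert h hBC) (by rw [card_insert_of_notMem hhB, hBcard])
  rw [setEff_insert_top hinj htop hBC, setEff_insert_top hinj htop hSC] at hle
  exact le_of_mul_le_mul_left (by linarith) hh.2.1

lemma isOptimal_insert_top (hinj : Set.InjOn adjEcpm ↑(insert h C))
    (htop : ∀ x ∈ C, adjEcpm x < adjEcpm h) {k : ℕ} {A : Finset (ℝ × ℝ)}
    (hA : A ⊆ insert h C) (hcard : A.card = k + 1)
    (hwithout : ∀ B ⊆ C, B.card = k + 1 → setEff B ≤ setEff A)
    (hwith : ∀ B ⊆ C, B.card = k → h.1 + h.2 * setEff B ≤ setEff A) :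
    IsOptimal (insert h C) (k + 1) A := by
  refine ⟨hA, hcard, fun B hB hBcard => ?_⟩
  by_cases hhB : h ∈ B
  · have hBC : B.erase h ⊆ C := subset_insert_iff.1 hB
    rw [← insert_erase hhB, setEff_insert_top hinj htop hBC]
    exact hwith _ hBC (by rw [card_erase_of_mem hhB, hBcard, Nat.add_sub_cancel])
  · exact hwithout B ((subset_insert_iff_of_notMem hhB).1 hB) hBcard

lemma exists_isOptimal_insert_of_top_notMem (hC : ∀ a ∈ insert h C, IsBidder a)
    (hinj : Set.InjOn adjEcpm ↑(insert h C)) (htop : ∀ x ∈ C, adjEcpm x < adjEcpm h)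
    (ih : HasSubsetStructure C) {k : ℕ} {S : Finset (ℝ × ℝ)}
    (hS : IsOptimal (insert h C) k S) (hhS : h ∉ S) :
    ∃ x ∈ insert h C, x ∉ S ∧ IsOptimal (insert h C) (k + 1) (insert x S) := by
  have hSC : S ⊆ C := (subset_insert_iff_of_notMem hhS).1 hS.1
  have hwith : ∀ B ⊆ C, B.card = k → h.1 + h.2 * setEff B ≤ setEff (insert h S) := by
    intro B hBC hBcard
    rw [setEff_insert_top hinj htop hSC]
    have := hS.2.2 B (hBC.trans (subset_insert h C)) hBcard
    have := (hC h (mem_insert_self h C)).2.1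
    gcongr
  by_cases hwithout : ∀ B ⊆ C, B.card = k + 1 → setEff B ≤ setEff (insert h S)
  · exact ⟨h, mem_insert_self h C, hhS, isOptimal_insert_top hinj htop
      (insert_subset_insert h hSC) (by rw [card_insert_of_notMem hhS, hS.2.1]) hwithout hwith⟩
  push Not at hwithout
  obtain ⟨B₀, hB₀C, hB₀card, hlt⟩ := hwithout
  obtain ⟨x, hxC, hxS, hW⟩ := ih k S (hS.anti hSC (subset_insert h C))
    (by have := card_le_card hB₀C; omega)
  have hB₀ := hW.2.2 B₀ hB₀C hB₀card
  exact ⟨x, mem_insert_of_mem hxC, hxS, isOptimal_insert_top hinj htop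
    (hW.1.trans (subset_insert h C)) hW.2.1 hW.2.2
    fun B hBC hBcard => (hwith B hBC hBcard).trans (hlt.le.trans hB₀)⟩

lemma setEff_insert_insert_le_of_top_mem (hC : ∀ a ∈ insert h C, IsBidder a)
    (hinj : Set.InjOn adjEcpm ↑(insert h C)) (htop : ∀ x ∈ C, adjEcpm x < adjEcpm h) {k : ℕ}
    {S : Finset (ℝ × ℝ)} (hS : IsOptimal (insert h C) (k + 1) S) (hhS : h ∈ S)
    {x y : ℝ × ℝ} (hxC : x ∈ C) (hyC : y ∈ C) (hxS : x ∉ S) (hyS : y ∉ S)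
    (hxy : x ≠ y)
    (hW : IsOptimal C (k + 1) (insert x (S.erase h))) :
    setEff (insert y (insert x (S.erase h))) ≤ h.1 + h.2 * setEff (insert x (S.erase h)) := by
  set S₀ := S.erase h
  have hS₀C : S₀ ⊆ C := subset_insert_iff.1 hS.1
  have hS₀ : S₀ ⊆ insert h C := (erase_subset h S).trans hS.1
  have hnotMem : ∀ z, z ∉ S → z ∉ S₀ := fun z hz hz₀ => hz (mem_of_mem_erase hz₀)
  have hcard : ∀ z, z ∉ S → (insert z S₀).card = k + 1 := fun z hz => by
    rw [card_insert_of_notMem (hnotMem z hz), card_erase_of_mem hhS, hS.2.1, Nat.add_sub_cancel]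
  have hgain : ∀ z ∈ C, z ∉ S → setEff (insert z S₀) ≤ h.1 + h.2 * setEff S₀ := by
    intro z hzC hzS
    rw [← setEff_insert_top hinj htop hS₀C, insert_erase hhS]
    exact hS.2.2 _ (insert_subset (mem_insert_of_mem hzC) hS₀) (hcard z hzS)
  have hsub : ↑(insert y (insert x S₀)) ⊆ (↑(insert h C) : Set (ℝ × ℝ)) :=
    coe_subset.2 <| insert_subset (mem_insert_of_mem hyC)
      (insert_subset (mem_insert_of_mem hxC) hS₀)
  have hbid : ∀ a ∈ S₀, IsBidder a := fun a ha => hC a (hS₀ ha)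
  have hS₀h : ∀ a ∈ S₀, adjEcpm a ≤ adjEcpm h := fun a ha => (htop a (hS₀C ha)).le
  have hh := hC h (mem_insert_self h C)
  rcases lt_or_gt_of_ne fun heq => hxy (hinj.mono hsub (by simp) (by simp) heq) with hlt | hlt
  · calc setEff (insert y (insert x S₀)) ≤ h.1 + h.2 * setEff (insert y S₀) :=
          setEff_insert_insert_le hbid hh (hC y (mem_insert_of_mem hyC)) (hinj.mono hsub)
            (hnotMem y hyS) hlt hS₀h (htop y hyC).le (hgain x hxC hxS)
      _ ≤ h.1 + h.2 * setEff (insert x S₀) := by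
          have := hW.2.2 _ (insert_subset hyC hS₀C) (hcard y hyS)
          have := hh.2.1
          gcongr
  · rw [insert_comm] at hsub ⊢
    exact setEff_insert_insert_le hbid hh (hC x (mem_insert_of_mem hxC)) (hinj.mono hsub)
      (hnotMem x hxS) hlt hS₀h (htop x hxC).le (hgain y hyC hyS)

lemma exists_isOptimal_insert_of_top_mem (hC : ∀ a ∈ insert h C, IsBidder a)
    (hinj : Set.InjOn adjEcpm ↑(insert h C)) (htop : ∀ x ∈ C, adjEcpm x < adjEcpm h)
    (ih : HasSubsetStructure C) {k : ℕ} {S : Finset (ℝ × ℝ)}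
    (hS : IsOptimal (insert h C) (k + 1) S) (hhS : h ∈ S) (hk : k + 1 < (insert h C).card) :
    ∃ x ∈ insert h C, x ∉ S ∧ IsOptimal (insert h C) (k + 1 + 1) (insert x S) := by
  have hhC : h ∉ C := fun hhC => lt_irrefl _ (htop h hhC)
  rw [card_insert_of_notMem hhC] at hk
  obtain ⟨x, hxC, hxS₀, hW⟩ :=
    ih k _ (isOptimal_erase_top (hC h (mem_insert_self h C)) hinj htop hS hhS) (by omega)
  have hxS : x ∉ S := fun hxS => hxS₀ (mem_erase.2 ⟨fun hxh => hhC (hxh ▸ hxC), hxS⟩)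
  have hx : insert x S = insert h (insert x (S.erase h)) := by
    rw [insert_comm, insert_erase hhS]
  refine ⟨x, mem_insert_of_mem hxC, hxS, ?_⟩
  rw [hx]
  refine isOptimal_insert_top hinj htop (insert_subset_insert h hW.1)
    (by rw [card_insert_of_notMem fun hhW => hhC (hW.1 hhW), hW.2.1]) ?_ ?_
  · intro B hBC hBcard
    obtain ⟨y, hyC, hyW, hV⟩ := ih (k + 1) _ hW (by have := card_le_card hBC; omega)
    have hyS : y ∉ S := fun hyS => hyW (mem_insert_of_mem (mem_erase.2
      ⟨fun hyh => hhC (hyh ▸ hyC), hyS⟩))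
    have hxy : x ≠ y := fun hxy => hyW (hxy ▸ mem_insert_self x _)
    rw [setEff_insert_top hinj htop hW.1]
    exact (hV.2.2 B hBC hBcard).trans (setEff_insert_insert_le_of_top_mem hC hinj htop hS hhS
      hxC hyC hxS hyS hxy hW)
  · intro B hBC hBcard
    rw [setEff_insert_top hinj htop hW.1]
    have := hW.2.2 B hBC hBcard
    have := (hC h (mem_insert_self h C)).2.1
    gcongr

end TopBidder

theorem hasSubsetStructure {C : Finset (ℝ × ℝ)} (hC : ∀ a ∈ C, IsBidder a)
    (hinj : Set.InjOn adjEcpm ↑C) : HasSubsetStructure C := by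
  induction C using Finset.induction_on_max_value adjEcpm with
  | empty => intro k S _ hk; simp at hk
  | insert h C hhC hle ih =>
    have htop : ∀ x ∈ C, adjEcpm x < adjEcpm h := fun x hx => (hle x hx).lt_of_ne
      fun heq => hhC (hinj (by simp [hx]) (by simp) heq ▸ hx)
    have ih' := ih (fun a ha => hC a (mem_insert_of_mem ha)) (hinj.mono (by simp))
    intro k S hS hk
    by_cases hhS : h ∈ S
    · obtain ⟨m, rfl⟩ : ∃ m, k = m + 1 :=
        Nat.exists_eq_add_one.2 (hS.2.1 ▸ card_pos.2 ⟨h, hhS⟩)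
      exact exists_isOptimal_insert_of_top_mem hC hinj htop ih' hS hhS hk
    · exact exists_isOptimal_insert_of_top_notMem hC hinj htop ih' hS hhS

end SubsetStructure

open SubsetStructure

/-- Theorem 3 (subset structure): for any optimal assignment `S` of `j−1` slots from a
finite bidder set `C` (bidders with `e > 0`, `q ∈ (0,1)`, pairwise distinct adjusted
ecpms), there is an optimal assignment `S'` of `j` slots whose bidder set strictly
contains that of `S`. -/
theorem subset_structure
    (C : Finset (ℝ × ℝ))
    (hC : ∀ a ∈ C, 0 < a.1 ∧ 0 < a.2 ∧ a.2 < 1)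
    (hdistinct : ∀ a ∈ C, ∀ b ∈ C, a.1 / (1 - a.2) = b.1 / (1 - b.2) → a = b)
    (j : ℕ) (hj1 : 1 ≤ j) (hjC : j ≤ C.card)
    (S : List (ℝ × ℝ))
    (hSnd : S.Nodup) (hSmem : ∀ a ∈ S, a ∈ C) (hSlen : S.length = j - 1)
    (hSopt : ∀ T : List (ℝ × ℝ), T.Nodup → (∀ a ∈ T, a ∈ C) →
      T.length = j - 1 → eff T ≤ eff S) :
    ∃ S' : List (ℝ × ℝ), S'.Nodup ∧ (∀ a ∈ S', a ∈ C) ∧ S'.length = j ∧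
      (∀ T : List (ℝ × ℝ), T.Nodup → (∀ a ∈ T, a ∈ C) →
        T.length = j → eff T ≤ eff S') ∧
      S.toFinset ⊂ S'.toFinset := by
  have hinj : Set.InjOn adjEcpm ↑C := fun a ha b hb => hdistinct a ha b hb
  have hsort : ∀ L : List (ℝ × ℝ), L.Nodup → (∀ a ∈ L, a ∈ C) →
      eff L ≤ setEff L.toFinset :=
    fun L hL hLC => eff_le_setEff_toFinset hL (fun a ha => hC a (hLC a ha))
      (hinj.mono (Finset.coe_subset.2 fun a ha => hLC a (List.mem_toFinset.1 ha)))
  have hS : IsOptimal C (j - 1) S.toFinset :=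
    ⟨fun a ha => hSmem a (List.mem_toFinset.1 ha),
      by rw [List.toFinset_card_of_nodup hSnd, hSlen],
      fun B hBC hBcard => (hSopt _ (nodup_ecpmSort B) (fun a ha => hBC (mem_ecpmSort.1 ha))
        (by rw [length_ecpmSort, hBcard])).trans (hsort S hSnd hSmem)⟩
  obtain ⟨x, -, hxS, hopt⟩ := hasSubsetStructure hC hinj (j - 1) _ hS (by omega)
  rw [Nat.sub_add_cancel hj1] at hopt
  refine ⟨ecpmSort (insert x S.toFinset), nodup_ecpmSort _,
    fun a ha => hopt.1 (mem_ecpmSort.1 ha), by rw [length_ecpmSort, hopt.2.1],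
    fun T hT hTC hTlen => ?_, ?_⟩
  · exact (hsort T hT hTC).trans (hopt.2.2 _ (fun a ha => hTC a (List.mem_toFinset.1 ha))
      (by rw [List.toFinset_card_of_nodup hT, hTlen]))
  · rw [toFinset_ecpmSort]
    exact Finset.ssubset_insert hxS
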